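/- Let G be a finite group, P a G-poset with an initial object x₀, and ρ : P⋊G → C a category extension; give C the atomic topology. Then for every presheaf of sets 𝔊 on C, the sheafification of 𝔊 is naturally isomorphic to the fixed-point presheaf F_{𝔊(x₀)}, where 𝔊(x₀) carries the right G-set structure described below; in particular F_{𝔊(x₀)}(x) ≅ 𝔊(x₀)^{K(x)} for every object x. -/

import Mathlib

open CategoryTheory

/-! ## Basic site-theoretic notions -/

/-- The Ore condition: any cospan can be completed to a commutative square. -/
def OreCondition (C : Type*) [Category C] : Prop :=
  ∀ ⦃x y z : C⦄ (f : y ⟶ x) (g : z ⟶ x),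
    ∃ (w : C) (p : w ⟶ y) (q : w ⟶ z), p ≫ f = q ≫ g

/-- A Grothendieck topology is the atomic topology iff its covering sieves are
exactly the nonempty sieves. -/
def IsAtomicTopology {C : Type*} [Category C] (J : GrothendieckTopology C) : Prop :=
  ∀ (x : C) (S : Sieve x), S ∈ J x ↔ ∃ (y : C) (f : y ⟶ x), S f

/-- The presieve on `c` consisting of all morphisms with domain `c₀`. -/
def domPresieve {C : Type*} [Category C] (c₀ : C) (c : C) : Presieve c :=
  fun Y => {_f | Y = c₀}

/-! ## Right `G`-sets and the orbit category -/

/-- The category of right `G`-sets, realized as presheaves of sets on the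
one-object category of `G`. -/
abbrev GSet (G : Type) [Group G] := (SingleObj G)ᵒᵖ ⥤ Type

variable {G : Type} [Group G]

/-- The right coset space `H\G` as a right `G`-set (`G` acting by right
multiplication). -/
def cosetGSet (H : Subgroup G) : GSet G where
  obj _ := Quotient (QuotientGroup.rightRel H)
  map f := TypeCat.ofHom (Quotient.map' (fun x => x * f.unop)
    (fun a b hab => by
      rw [QuotientGroup.rightRel_apply] at hab ⊢
      simpa [mul_assoc] using hab))
  map_id _ := by
    ext q
    induction q using Quotient.inductionOn' with
    | h a => exact congrArg (Quotient.mk _) (mul_one a)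
  map_comp f g := by
    ext q
    induction q using Quotient.inductionOn' with
    | h a => exact congrArg (Quotient.mk _) (mul_assoc a f.unop g.unop).symm

/-- The orbit category `O(G)`: the full subcategory of right `G`-sets on the
coset spaces `H\G`, indexed by the subgroups of `G`. -/
abbrev OrbitCat (G : Type) [Group G] := InducedCategory (GSet G) (cosetGSet (G := G))

/-- For `a ∈ G`, the `G`-map `c_a : 1\G → 1\G`, `k ↦ a * k`. -/
def botAuto (a : G) : cosetGSet (⊥ : Subgroup G) ⟶ cosetGSet (⊥ : Subgroup G) where
  app _ := TypeCat.ofHom (Quotient.map' (fun k => a * k)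
    (fun x y hxy => by
      rw [QuotientGroup.rightRel_apply] at hxy ⊢
      simp only [Subgroup.mem_bot] at hxy ⊢
      rw [mul_inv_rev, ← mul_assoc, mul_assoc a, hxy]
      simp))
  naturality X Y f := by
    ext q
    induction q using Quotient.inductionOn' with
    | h k => exact congrArg (Quotient.mk _) (mul_assoc a k f.unop).symm

/-- The functor from the one-object category of `G` to the orbit category with
value `1\G`, sending `a` to `c_a`; it makes `F(1\G)` a right `G`-set for any
presheaf `F` on the orbit category. -/
def orbitBotIota (G : Type) [Group G] : SingleObj G ⥤ OrbitCat G where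
  obj _ := (⊥ : Subgroup G)
  map a := InducedCategory.homMk (botAuto a)
  map_id _ := by
    apply InducedCategory.hom_ext
    apply NatTrans.ext
    funext X
    ext q
    induction q using Quotient.inductionOn' with
    | h k => exact congrArg (Quotient.mk _) (one_mul k)
  map_comp {x y z} a b := by
    apply InducedCategory.hom_ext
    apply NatTrans.ext
    funext X
    ext q
    induction q using Quotient.inductionOn' with
    | h k => exact congrArg (Quotient.mk _) (mul_assoc b a k)

/-! ## The transporter category of a `G`-poset -/

/-- The transporter category `P ⋊ G` of a `G`-poset `P`: objects are those of
`P`, and morphisms `x ⟶ y` are elements `g ∈ G` with `g • x ≤ y`. -/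
@[ext] structure Transporter (G : Type) (P : Type) where pt : P

instance Transporter.category (G P : Type) [Group G] [PartialOrder P] [MulAction G P]
    [CovariantClass G P (· • ·) (· ≤ ·)] : Category (Transporter G P) where
  Hom x y := { g : G // g • x.pt ≤ y.pt }
  id x := ⟨1, by simp⟩
  comp {x y z} f g := ⟨g.1 * f.1, by
    rw [mul_smul]
    exact le_trans (CovariantClass.elim g.1 f.2) g.2⟩
  id_comp f := Subtype.ext (mul_one _)
  comp_id f := Subtype.ext (one_mul _)
  assoc f g h := Subtype.ext (mul_assoc h.1 g.1 f.1).symm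

variable {P : Type} [PartialOrder P] [MulAction G P]
    [CovariantClass G P (· • ·) (· ≤ ·)]

theorem smul_le_smul_act (g : G) {a b : P} (h : a ≤ b) : g • a ≤ g • b :=
  CovariantClass.elim g h

/-- An initial (i.e. bottom) element of a `G`-poset is fixed by `G`. -/
theorem smul_bot_eq {x₀ : P} (hbot : ∀ x : P, x₀ ≤ x) (g : G) : g • x₀ = x₀ :=
  le_antisymm (by simpa using smul_le_smul_act g (hbot (g⁻¹ • x₀))) (hbot _)

/-- The endomorphism `(g, id)` of the initial object `x₀` of `P ⋊ G`. -/
def gmor {x₀ : P} (hbot : ∀ x : P, x₀ ≤ x) (g : G) :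
    (⟨x₀⟩ : Transporter G P) ⟶ (⟨x₀⟩ : Transporter G P) :=
  ⟨g, le_of_eq (smul_bot_eq hbot g)⟩

theorem gmor_comp {x₀ : P} (hbot : ∀ x : P, x₀ ≤ x) (a b : G) :
    gmor (G := G) hbot b ≫ gmor hbot a = gmor hbot (a * b) := rfl

theorem gmor_one {x₀ : P} (hbot : ∀ x : P, x₀ ≤ x) :
    gmor (G := G) hbot (1 : G) = 𝟙 (⟨x₀⟩ : Transporter G P) := rfl

/-- The projection functor `π : P ⋊ G ⥤ G`. -/
def piFunctor (G P : Type) [Group G] [PartialOrder P] [MulAction G P]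
    [CovariantClass G P (· • ·) (· ≤ ·)] : Transporter G P ⥤ SingleObj G where
  obj _ := SingleObj.star G
  map f := f.1
  map_id _ := rfl
  map_comp _ _ := rfl

/-! ## Quotients of transporter categories and fixed-point presheaves -/

variable {C : Type} [SmallCategory C]

section
variable (ρ : Transporter G P ⥤ C) {x₀ : P} (hbot : ∀ x : P, x₀ ≤ x)

/-- `Hom_C(x₀, c)` as a right `G`-set, with `f · g := ρ(g, id) ≫ f`. -/
def homGSet (c : C) : GSet G where
  obj _ := (ρ.obj ⟨x₀⟩ ⟶ c)
  map f := TypeCat.ofHom (fun φ => ρ.map (gmor hbot f.unop) ≫ φ)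
  map_id _ := by
    ext φ
    show ρ.map (gmor hbot (1 : G)) ≫ φ = φ
    rw [gmor_one, ρ.map_id, Category.id_comp]
  map_comp {X Y Z} f g := by
    ext φ
    show ρ.map (gmor hbot (f.unop * g.unop)) ≫ φ =
      ρ.map (gmor hbot g.unop) ≫ ρ.map (gmor hbot f.unop) ≫ φ
    rw [← gmor_comp, ρ.map_comp, Category.assoc]

/-- Postcomposition `Hom_C(x₀, c) → Hom_C(x₀, c')` with `φ : c ⟶ c'`, as a map
of right `G`-sets. -/
def homGSetMap {c c' : C} (φ : c ⟶ c') : homGSet ρ hbot c ⟶ homGSet ρ hbot c' where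
  app _ := TypeCat.ofHom (fun f => (show ρ.obj ⟨x₀⟩ ⟶ c from f) ≫ φ)
  naturality X Y f := by
    ext ψ
    show (ρ.map (gmor hbot f.unop) ≫ (show ρ.obj ⟨x₀⟩ ⟶ c from ψ)) ≫ φ =
      ρ.map (gmor hbot f.unop) ≫ ((show ρ.obj ⟨x₀⟩ ⟶ c from ψ) ≫ φ)
    exact Category.assoc _ _ _

theorem homGSetMap_id (c : C) : homGSetMap ρ hbot (𝟙 c) = 𝟙 (homGSet ρ hbot c) := by
  apply NatTrans.ext
  funext X
  ext f
  exact Category.comp_id f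

theorem homGSetMap_comp {c c' c'' : C} (φ : c ⟶ c') (ψ : c' ⟶ c'') :
    homGSetMap ρ hbot (φ ≫ ψ) = homGSetMap ρ hbot φ ≫ homGSetMap ρ hbot ψ := by
  apply NatTrans.ext
  funext X
  ext f
  exact (Category.assoc _ _ _).symm

/-- The fixed-point presheaf `F_M : x ↦ Hom_{G-Set}(Hom_C(x₀, x), M)` on `C`. -/
def fixedPointPresheaf (M : GSet G) : Cᵒᵖ ⥤ Type where
  obj c := homGSet ρ hbot c.unop ⟶ M
  map {c c'} ψ := TypeCat.ofHom (fun η => homGSetMap ρ hbot ψ.unop ≫ η)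
  map_id c := by
    refine TypeCat.homEquiv.injective (funext fun η => ?_)
    show homGSetMap ρ hbot (𝟙 c.unop) ≫ η = η
    rw [homGSetMap_id, Category.id_comp]
  map_comp {c c' c''} ψ ψ' := by
    refine TypeCat.homEquiv.injective (funext fun η => ?_)
    show homGSetMap ρ hbot (ψ'.unop ≫ ψ.unop) ≫ η = _
    rw [homGSetMap_comp, Category.assoc]
    rfl

/-- The right `G`-set `𝔊(x₀)` attached to a presheaf `𝔊` on `C`: `g ∈ G`
acts as `𝔊(ρ(g, id))`. -/
def evalGSet (𝔊 : Cᵒᵖ ⥤ Type) : GSet G where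
  obj _ := 𝔊.obj (Opposite.op (ρ.obj ⟨x₀⟩))
  map f := 𝔊.map (ρ.map (gmor hbot f.unop)).op
  map_id _ := by
    show 𝔊.map (ρ.map (gmor hbot (1 : G))).op = _
    rw [gmor_one, ρ.map_id]
    exact 𝔊.map_id _
  map_comp {X Y Z} f g := by
    show 𝔊.map (ρ.map (gmor hbot (f.unop * g.unop))).op = _
    rw [← gmor_comp, ρ.map_comp, op_comp, 𝔊.map_comp]

end

/-- `ρ : P⋊G ⥤ C` is a category extension: it is bijective on objects,
surjective on morphism sets, the kernel groups `K(y)` act freely by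
postcomposition on hom sets, and `ρ` exactly identifies the `K(y)`-orbits of
morphisms, i.e. `K(y)\Hom(x, y) ≅ Hom_C(ρx, ρy)`. -/
structure IsCatExtension (ρ : Transporter G P ⥤ C) : Prop where
  bij_obj : Function.Bijective ρ.obj
  surj_map : ∀ {x y : Transporter G P} (f : ρ.obj x ⟶ ρ.obj y), ∃ u : x ⟶ y, ρ.map u = f
  free : ∀ {y : Transporter G P} (α : y ⟶ y), ρ.map α = 𝟙 (ρ.obj y) →
    ∀ {x : Transporter G P} (u : x ⟶ y), u ≫ α = u → α = 𝟙 y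
  fiber : ∀ {x y : Transporter G P} (u u' : x ⟶ y),
    ρ.map u = ρ.map u' ↔ ∃ α : y ⟶ y, ρ.map α = 𝟙 (ρ.obj y) ∧ u ≫ α = u'

/-! ## The transporter category `T(G)` on subgroups -/

/-- The transporter category `T(G)`: objects are the subgroups of `G`,
morphisms `H ⟶ K` are elements `g ∈ G` with `gHg⁻¹ ≤ K`. -/
@[ext] structure TransporterCat (G : Type) [Group G] where sub : Subgroup G

instance TransporterCat.category (G : Type) [Group G] : Category (TransporterCat G) where
  Hom H K := { g : G // ∀ h ∈ H.sub, g * h * g⁻¹ ∈ K.sub }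
  id H := ⟨1, fun h hh => by simpa using hh⟩
  comp {H K L} f g := ⟨g.1 * f.1, fun h hh => by
    have hmem := g.2 _ (f.2 h hh)
    have heq : g.1 * (f.1 * h * f.1⁻¹) * g.1⁻¹ = (g.1 * f.1) * h * (g.1 * f.1)⁻¹ := by group
    rwa [heq] at hmem⟩
  id_comp f := Subtype.ext (mul_one _)
  comp_id f := Subtype.ext (one_mul _)
  assoc f g h := Subtype.ext (mul_assoc h.1 g.1 f.1).symm

/-- The conjugate subgroup `gHg⁻¹`. -/
def conjSubgroup (g : G) (H : Subgroup G) : Subgroup G :=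
  H.map (MulAut.conj g).toMonoidHom

lemma conjSubgroup_inv_mem {g : G} {H : Subgroup G} {w : G}
    (hw : w ∈ conjSubgroup g H) : g⁻¹ * w * g⁻¹⁻¹ ∈ H := by
  obtain ⟨h, hh, rfl⟩ := hw
  have : g⁻¹ * ((MulAut.conj g).toMonoidHom h) * g⁻¹⁻¹ = h := by
    simp [MulAut.conj_apply]; group
  rwa [this]

/-- The `G`-map `H\G → K\G`, `Hk ↦ Kgk`, attached to `g ∈ G` with `gHg⁻¹ ≤ K`. -/
def transToOrbit {H K : Subgroup G} (g : { g : G // ∀ h ∈ H, g * h * g⁻¹ ∈ K }) :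
    cosetGSet H ⟶ cosetGSet K where
  app _ := TypeCat.ofHom (Quotient.map' (fun k => g.1 * k)
    (fun a b hab => by
      rw [QuotientGroup.rightRel_apply] at hab ⊢
      have := g.2 _ hab
      have heq : g.1 * (b * a⁻¹) * g.1⁻¹ = (g.1 * b) * (g.1 * a)⁻¹ := by group
      rwa [heq] at this))
  naturality X Y f := by
    ext q
    induction q using Quotient.inductionOn' with
    | h k => exact congrArg (Quotient.mk _) (mul_assoc g.1 k f.unop).symm

/-- The setoid on `{g : G // gHg⁻¹ ≤ K}` whose classes are right cosets `Kg`. -/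
def transSetoid (H K : Subgroup G) : Setoid { g : G // ∀ h ∈ H, g * h * g⁻¹ ∈ K } where
  r a b := a.1 * b.1⁻¹ ∈ K
  iseqv := by
    constructor
    · intro a; simpa using K.one_mem
    · intro a b h
      simpa using K.inv_mem h
    · intro a b c h1 h2
      have := K.mul_mem h1 h2
      simpa [mul_assoc] using this

/-! ## The coset space `H\G` as a discrete `G`-poset -/

/-- The coset space `H\G` as a discretely ordered `G`-poset, with `g` acting
by `Hk ↦ Hkg⁻¹`. -/
def CosetPoset (G : Type) [Group G] (H : Subgroup G) :=
  Quotient (QuotientGroup.rightRel H)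

instance (H : Subgroup G) : PartialOrder (CosetPoset G H) where
  le x y := x = y
  le_refl _ := rfl
  le_trans _ _ _ h h' := Eq.trans h h'
  le_antisymm _ _ h _ := h

instance (H : Subgroup G) : MulAction G (CosetPoset G H) where
  smul g := Quotient.map' (fun k => k * g⁻¹)
    (fun a b hab => by
      rw [QuotientGroup.rightRel_apply] at hab ⊢
      simpa [mul_assoc] using hab)
  one_smul q := by
    induction q using Quotient.inductionOn' with
    | h k => exact congrArg (Quotient.mk _) (by simp)
  mul_smul a b q := by
    induction q using Quotient.inductionOn' with
    | h k => exact congrArg (Quotient.mk _) (by simp [mul_assoc])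

instance (H : Subgroup G) : CovariantClass G (CosetPoset G H) (· • ·) (· ≤ ·) where
  elim g x y h := le_of_eq (congrArg (g • ·) (le_antisymm h (Eq.symm h : y ≤ x)))

/-! ## Underlying `G`-set of a right `RG`-module -/

/-- The underlying right `G`-set of a right `RG`-module. -/
noncomputable def UGSet (R : Type) [CommRing R]
    (M : ModuleCat (MonoidAlgebra R G)ᵐᵒᵖ) : GSet G where
  obj _ := M
  map f := TypeCat.ofHom (fun m => (MulOpposite.op (MonoidAlgebra.single f.unop (1 : R))) • m)
  map_id _ := by
    ext m
    show (MulOpposite.op (MonoidAlgebra.single (1 : G) (1 : R))) • m = m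
    rw [← MonoidAlgebra.one_def, MulOpposite.op_one, one_smul]
  map_comp {X Y Z} f g := by
    ext m
    show (MulOpposite.op (MonoidAlgebra.single (f.unop * g.unop) (1 : R))) • m =
      (MulOpposite.op (MonoidAlgebra.single g.unop (1 : R))) •
        ((MulOpposite.op (MonoidAlgebra.single f.unop (1 : R))) • m)
    rw [smul_smul, ← MulOpposite.op_mul, MonoidAlgebra.single_mul_single, one_mul]



/-!
Every object of `C` receives a morphism from `x₀`, every morphism out of `x₀` factors through
every morphism with the same target, and `End(x₀)` is the image of `G`. The first two facts make
`F_M` a sheaf for the atomic topology: a compatible family is already determined by its member at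
a single arrow of the covering sieve. All three make the map `𝔊 ⟶ F_{𝔊(x₀)}`,
`s ↦ (b ↦ 𝔊(b) s)`, injective and surjective after restriction along any arrow out of `x₀`, i.e.
locally bijective; and a locally bijective map into a sheaf exhibits it as the sheafification.
-/

open Opposite

namespace CategoryTheory.GrothendieckTopology

variable (J : GrothendieckTopology C)

noncomputable def sheafifyIsoOfIsLocallyBijective {F F' : Cᵒᵖ ⥤ Type} (η : F ⟶ F')
    (hF' : Presheaf.IsSheaf J F') [Presheaf.IsLocallyInjective J η]
    [Presheaf.IsLocallySurjective J η] : J.sheafify F ≅ F' := by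
  have fac : J.toSheafify F ≫ J.sheafifyLift η hF' = η := J.toSheafify_sheafifyLift η hF'
  have : Presheaf.IsLocallySurjective J (J.sheafifyLift η hF') :=
    Presheaf.isLocallySurjective_of_isLocallySurjective_fac J fac
  have : Presheaf.IsLocallyInjective J (J.sheafifyLift η hF') :=
    (Presheaf.comp_isLocallyInjective_iff J (J.toSheafify F) _).1 (by rw [fac]; infer_instance)
  let lift : (⟨J.sheafify F, J.sheafify_isSheaf F⟩ : Sheaf J Type) ⟶ ⟨F', hF'⟩ :=
    ⟨J.sheafifyLift η hF'⟩
  have : IsIso lift := (Sheaf.isLocallyBijective_iff_isIso lift).1 ⟨‹_›, ‹_›⟩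
  exact (sheafToPresheaf J Type).mapIso (asIso lift)

end CategoryTheory.GrothendieckTopology

section

variable {ρ : Transporter G P ⥤ C} {x₀ : P} (hbot : ∀ x : P, x₀ ≤ x)

namespace IsCatExtension

variable (hρ : IsCatExtension ρ)
include hρ hbot

theorem exists_map_gmor_eq (e : ρ.obj ⟨x₀⟩ ⟶ ρ.obj ⟨x₀⟩) : ∃ g : G, ρ.map (gmor hbot g) = e := by
  obtain ⟨u, rfl⟩ := hρ.surj_map e
  exact ⟨u.1, rfl⟩

theorem nonempty_hom_obj_bot (c : C) : Nonempty (ρ.obj ⟨x₀⟩ ⟶ c) := by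
  obtain ⟨y, rfl⟩ := hρ.bij_obj.2 c
  exact ⟨ρ.map ⟨1, by simpa using hbot _⟩⟩

theorem exists_comp_eq {c d : C} (f : d ⟶ c) (b : ρ.obj ⟨x₀⟩ ⟶ c) :
    ∃ a : ρ.obj ⟨x₀⟩ ⟶ d, a ≫ f = b := by
  obtain ⟨y, rfl⟩ := hρ.bij_obj.2 c
  obtain ⟨z, rfl⟩ := hρ.bij_obj.2 d
  obtain ⟨⟨g, _⟩, rfl⟩ := hρ.surj_map f
  obtain ⟨⟨h, _⟩, rfl⟩ := hρ.surj_map b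
  refine ⟨ρ.map ⟨g⁻¹ * h, by rw [smul_bot_eq hbot]; exact hbot _⟩, ?_⟩
  rw [← ρ.map_comp]
  congr 1
  exact Subtype.ext (mul_inv_cancel_left g h)

end IsCatExtension

variable (ρ)

theorem fixedPointPresheaf_ext {M : GSet G} {c : C}
    {σ τ : (fixedPointPresheaf ρ hbot M).obj (op c)}
    (h : ∀ b, σ.app (op (SingleObj.star G)) b = τ.app (op (SingleObj.star G)) b) : σ = τ :=
  NatTrans.ext (funext fun _ => ConcreteCategory.hom_ext _ _ h)

@[simp]
theorem fixedPointPresheaf_map_app {M : GSet G} {c c' : C} (ψ : c' ⟶ c)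
    (σ : (fixedPointPresheaf ρ hbot M).obj (op c)) (b : ρ.obj ⟨x₀⟩ ⟶ c') :
    ((fixedPointPresheaf ρ hbot M).map ψ.op σ).app (op (SingleObj.star G)) b =
      σ.app (op (SingleObj.star G)) (b ≫ ψ) :=
  rfl

theorem fixedPointPresheaf_app_map_gmor_comp {M : GSet G} {c : C}
    (σ : (fixedPointPresheaf ρ hbot M).obj (op c))
    (g : op (SingleObj.star G) ⟶ op (SingleObj.star G)) (b : ρ.obj ⟨x₀⟩ ⟶ c) :
    σ.app _ (ρ.map (gmor hbot g.unop) ≫ b) = M.map g (σ.app _ b) :=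
  ConcreteCategory.congr_hom (σ.naturality g) b

theorem CategoryTheory.Presieve.FamilyOfElements.Compatible.fixedPointPresheaf_app_eq
    {M : GSet G} {X : C} {S : Presieve X}
    {x : Presieve.FamilyOfElements (fixedPointPresheaf ρ hbot M) S}
    (hx : x.Compatible) {d₁ d₂ : C} {f₁ : d₁ ⟶ X} {f₂ : d₂ ⟶ X} (h₁ : S f₁) (h₂ : S f₂)
    {a₁ : ρ.obj ⟨x₀⟩ ⟶ d₁} {a₂ : ρ.obj ⟨x₀⟩ ⟶ d₂} (w : a₁ ≫ f₁ = a₂ ≫ f₂) :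
    (x f₁ h₁).app (op (SingleObj.star G)) a₁ = (x f₂ h₂).app (op (SingleObj.star G)) a₂ := by
  have h : (x f₁ h₁).app (op (SingleObj.star G)) (𝟙 (ρ.obj ⟨x₀⟩) ≫ a₁) =
      (x f₂ h₂).app (op (SingleObj.star G)) (𝟙 (ρ.obj ⟨x₀⟩) ≫ a₂) :=
    congr_arg (fun σ => σ.app (op (SingleObj.star G)) (𝟙 (ρ.obj ⟨x₀⟩))) (hx a₁ a₂ h₁ h₂ w)
  simpa only [Category.id_comp] using h

def toFixedPointPresheaf (𝔊 : Cᵒᵖ ⥤ Type) :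
    𝔊 ⟶ fixedPointPresheaf ρ hbot (evalGSet ρ hbot 𝔊) where
  app c := TypeCat.ofHom fun s =>
    { app _ := TypeCat.ofHom fun b => 𝔊.map (show ρ.obj ⟨x₀⟩ ⟶ c.unop from b).op s
      naturality _ _ g := by
        ext b
        exact 𝔊.map_comp_apply _ (ρ.map (gmor hbot g.unop)).op s }
  naturality c c' ψ := by
    ext s
    refine fixedPointPresheaf_ext ρ hbot fun b => ?_
    exact (𝔊.map_comp_apply ψ b.op s).symm

variable {ρ} (hρ : IsCatExtension ρ) {J : GrothendieckTopology C} (hJ : IsAtomicTopology J)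
include hρ hJ

theorem isSheaf_fixedPointPresheaf (M : GSet G) :
    Presheaf.IsSheaf J (fixedPointPresheaf ρ hbot M) := by
  rw [isSheaf_iff_isSheaf_of_type]
  intro X S hS x hx
  obtain ⟨y, f, hf⟩ := (hJ X S).1 hS
  choose lift hlift using hρ.exists_comp_eq hbot f
  have lift_comp : ∀ {d : C} {f' : d ⟶ X} (h' : S f') (a : ρ.obj ⟨x₀⟩ ⟶ d),
      (x f hf).app _ (lift (a ≫ f')) = (x f' h').app _ a :=
    fun h' a => hx.fixedPointPresheaf_app_eq ρ hbot hf h' (hlift _)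
  refine ⟨{ app _ := TypeCat.ofHom fun b => (x f hf).app _ (lift b), naturality := ?_ }, ?_, ?_⟩
  · intro _ _ g
    ext b
    change ρ.obj ⟨x₀⟩ ⟶ X at b
    calc (x f hf).app _ (lift (ρ.map (gmor hbot g.unop) ≫ b))
        = (x f hf).app _ (ρ.map (gmor hbot g.unop) ≫ lift b) :=
          hx.fixedPointPresheaf_app_eq ρ hbot hf hf (by rw [hlift, Category.assoc, hlift])
      _ = M.map g ((x f hf).app _ (lift b)) := fixedPointPresheaf_app_map_gmor_comp ρ hbot _ g _
  · intro d f' h'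
    exact fixedPointPresheaf_ext ρ hbot fun a => lift_comp h' a
  · intro t ht
    refine fixedPointPresheaf_ext ρ hbot fun b => ?_
    show t.app _ b = (x f hf).app _ (lift b)
    rw [← ht f hf, fixedPointPresheaf_map_app]
    exact congrArg _ (hlift b).symm

theorem isLocallyInjective_toFixedPointPresheaf (𝔊 : Cᵒᵖ ⥤ Type) :
    Presheaf.IsLocallyInjective J (toFixedPointPresheaf ρ hbot 𝔊) where
  equalizerSieve_mem {c} s t h := by
    obtain ⟨b⟩ := hρ.nonempty_hom_obj_bot hbot c.unop
    refine (hJ _ _).2 ⟨_, b, ?_⟩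
    exact ConcreteCategory.congr_hom
      (congr_fun (congr_arg NatTrans.app h) (op (SingleObj.star G))) b

theorem isLocallySurjective_toFixedPointPresheaf (𝔊 : Cᵒᵖ ⥤ Type) :
    Presheaf.IsLocallySurjective J (toFixedPointPresheaf ρ hbot 𝔊) where
  imageSieve_mem {c} σ := by
    obtain ⟨b⟩ := hρ.nonempty_hom_obj_bot hbot c
    refine (hJ _ _).2 ⟨_, b, σ.app (op (SingleObj.star G)) b,
      fixedPointPresheaf_ext ρ hbot fun e => ?_⟩
    obtain ⟨g, rfl⟩ := hρ.exists_map_gmor_eq hbot e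
    exact (fixedPointPresheaf_app_map_gmor_comp ρ hbot σ
      (show SingleObj.star G ⟶ SingleObj.star G from g).op b).symm

end

theorem sheafification_eq_fixedPoint_general (G : Type) [Group G] (P : Type) [PartialOrder P]
    [MulAction G P] [CovariantClass G P (· • ·) (· ≤ ·)]
    (x₀ : P) (hbot : ∀ x : P, x₀ ≤ x)
    (C : Type) [SmallCategory C] (ρ : Transporter G P ⥤ C) (hρ : IsCatExtension ρ)
    (J : GrothendieckTopology C) (hJ : IsAtomicTopology J) (𝔊 : Cᵒᵖ ⥤ Type) :
    Nonempty (J.sheafify 𝔊 ≅ fixedPointPresheaf ρ hbot (evalGSet ρ hbot 𝔊)) :=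
  have := isLocallyInjective_toFixedPointPresheaf hbot hρ hJ 𝔊
  have := isLocallySurjective_toFixedPointPresheaf hbot hρ hJ 𝔊
  ⟨J.sheafifyIsoOfIsLocallyBijective (toFixedPointPresheaf ρ hbot 𝔊)
    (isSheaf_fixedPointPresheaf hbot hρ hJ _)⟩

/-- For a category extension `ρ : P⋊G ⥤ C` with the atomic topology on `C`, the
sheafification of any presheaf `𝔊` on `C` is naturally isomorphic to the
fixed-point presheaf of the right `G`-set `𝔊(x₀)`. -/
theorem sheafification_eq_fixedPoint (G : Type) [Group G] [Finite G] (P : Type) [PartialOrder P]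
    [MulAction G P] [CovariantClass G P (· • ·) (· ≤ ·)]
    (x₀ : P) (hbot : ∀ x : P, x₀ ≤ x)
    (C : Type) [SmallCategory C] (ρ : Transporter G P ⥤ C) (hρ : IsCatExtension ρ)
    (J : GrothendieckTopology C) (hJ : IsAtomicTopology J) (𝔊 : Cᵒᵖ ⥤ Type) :
    Nonempty (J.sheafify 𝔊 ≅ fixedPointPresheaf ρ hbot (evalGSet ρ hbot 𝔊)) :=
  sheafification_eq_fixedPoint_general G P x₀ hbot C ρ hρ J hJ 𝔊
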